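/- For any game v with v(∅)=0 and mixed permission structure ϱ on finite N, the permission restriction admits the dividend expansion P_ϱ(v) = ∑_{E∈A_ϱ} ( ∑_{F: E∈Λ*(F)} d^{P_ϱ(u_F)}(E) · d^v(F) ) · u_E, where A_ϱ is the set of autonomous coalitions. -/

import Mathlib

open Finset
open scoped Classical

/-- Harsanyi dividend of coalition `E` in game `v`. -/
noncomputable def dividend {α : Type*} [DecidableEq α] (v : Finset α → ℝ) (E : Finset α) : ℝ :=
  ∑ F ∈ E.powerset, (-1 : ℝ) ^ (E.card - F.card) * v F

/-- The unanimity game `u_E`. -/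
noncomputable def unanim {α : Type*} [DecidableEq α] (E F : Finset α) : ℝ :=
  if E ⊆ F then 1 else 0

/-- The autonomous part of `E` relative to a family `A` of autonomous coalitions:
the union of all members of `A` contained in `E`. -/
def autPartA {α : Type*} [DecidableEq α] (A : Finset (Finset α)) (E : Finset α) : Finset α :=
  (E.powerset.filter (· ∈ A)).sup id

/-- `Λ(E)`: the minimal autonomous coalitions containing `E`. -/
def LamSet {α : Type*} [DecidableEq α] (A : Finset (Finset α)) (E : Finset α) :
    Finset (Finset α) :=
  A.filter (fun F => E ⊆ F ∧ ∀ G ∈ A, E ⊆ G → G ⊆ F → G = F)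

/-- `F ∈ Λ*(E)`: `F` is a union of (finitely many, at least one) members of `Λ(E)`. -/
def LamStar {α : Type*} [DecidableEq α] (A : Finset (Finset α)) (E F : Finset α) : Prop :=
  ∃ T ⊆ LamSet A E, T.Nonempty ∧ F = T.sup id

/-!
Möbius inversion writes every game as `w = ∑_E d^w(E) u_E`, and `P_ϱ(w)(G) = w(α(G))` is linear
in `w`, so `d^{P_ϱ v}(E) = ∑_F d^v(F) d^{P_ϱ u_F}(E)`. The restricted unanimity game is
`u_F(α(G)) = 1 - ∏_{L ∈ Λ(F)} (1 - u_L(G))`, because `F ⊆ α(G)` exactly when some minimal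
autonomous superset of `F` lies in `G`. Expanding the product, and using `∏_{L ∈ T} u_L = u_{⋃ T}`,
writes `P_ϱ(u_F)` as a combination of the games `u_{⋃ T}` with `∅ ≠ T ⊆ Λ(F)`, so its dividends
vanish outside `Λ*(F)`; and `Λ*(F) ⊆ A` since `A` is closed under unions.
-/

namespace Finset

variable {α R : Type*} [DecidableEq α] [CommRing R]

lemma sum_Icc_neg_one_pow_card_sub_left {B G : Finset α} (hBG : B ⊆ G) :
    ∑ E ∈ Icc B G, (-1 : R) ^ (#E - #B) = if B = G then 1 else 0 := by
  have hinj : Set.InjOn (B ∪ ·) (G \ B).powerset := fun C hC D hD h => by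
    simp only [coe_powerset, Set.mem_preimage, Set.mem_powerset_iff, coe_subset] at hC hD
    rw [← union_sdiff_cancel_left (disjoint_of_subset_right hC disjoint_sdiff),
      ← union_sdiff_cancel_left (disjoint_of_subset_right hD disjoint_sdiff)]
    exact congrArg (· \ B) h
  rw [Icc_eq_image_powerset hBG, sum_image hinj]
  have hcard : ∀ C ∈ (G \ B).powerset, #(B ∪ C) - #B = #C := fun C hC => by
    rw [card_union_of_disjoint (disjoint_of_subset_right (mem_powerset.1 hC) disjoint_sdiff),
      Nat.add_sub_cancel_left]
  rw [sum_congr rfl fun C hC => by rw [hcard C hC]]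
  have := congrArg (Int.cast : ℤ → R) (sum_powerset_neg_one_pow_card (x := G \ B))
  push_cast at this
  rw [this]
  exact if_congr (sdiff_eq_empty_iff_subset.trans
    ⟨subset_antisymm hBG, fun h => h ▸ subset_rfl⟩) rfl rfl

lemma sum_Icc_neg_one_pow_card_sub_right {B G : Finset α} (hBG : B ⊆ G) :
    ∑ E ∈ Icc B G, (-1 : R) ^ (#G - #E) = if B = G then 1 else 0 := by
  have hsign : ∀ E ∈ Icc B G, (-1 : R) ^ (#G - #E) = (-1) ^ (#G - #B) * (-1) ^ (#E - #B) :=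
    fun E hE => by
      obtain ⟨hBE, hEG⟩ := mem_Icc.1 hE
      have : #G - #B = (#G - #E) + (#E - #B) := by
        have := card_le_card hBE; have := card_le_card hEG; omega
      rw [this, pow_add, mul_assoc, ← pow_add, ← two_mul, pow_mul, neg_one_sq, one_pow, mul_one]
  rw [sum_congr rfl hsign, ← mul_sum, sum_Icc_neg_one_pow_card_sub_left hBG]
  split_ifs with h <;> simp [h]

end Finset

open Finset

section Dividend

variable {α : Type*} [DecidableEq α]

lemma dividend_unanim (S E : Finset α) : dividend (unanim S) E = if S = E then 1 else 0 := by
  have hIcc : E.powerset.filter (S ⊆ ·) = Icc S E := by ext; simp [and_comm]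
  simp only [dividend, unanim, mul_ite, mul_one, mul_zero, ← sum_filter, hIcc]
  by_cases hSE : S ⊆ E
  · exact sum_Icc_neg_one_pow_card_sub_right hSE
  · rw [Icc_eq_empty hSE, sum_empty, if_neg (fun h => hSE h.subset)]

lemma dividend_sum_mul {ι : Type*} (s : Finset ι) (c : ι → ℝ) (f : ι → Finset α → ℝ)
    (E : Finset α) :
    dividend (fun G => ∑ i ∈ s, c i * f i G) E = ∑ i ∈ s, c i * dividend (f i) E := by
  simp only [dividend, mul_sum, sum_comm (s := E.powerset)]
  exact sum_congr rfl fun i _ => sum_congr rfl fun F _ => by ring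

lemma sum_powerset_dividend (w : Finset α → ℝ) (G : Finset α) :
    ∑ E ∈ G.powerset, dividend w E = w G := by
  calc ∑ E ∈ G.powerset, dividend w E
      = ∑ F ∈ G.powerset, ∑ E ∈ Icc F G, (-1 : ℝ) ^ (#E - #F) * w F := by
        refine sum_comm' fun E F => ?_
        simp only [mem_powerset, mem_Icc]
        exact ⟨fun ⟨hEG, hFE⟩ => ⟨⟨hFE, hEG⟩, hFE.trans hEG⟩, fun ⟨⟨hFE, hEG⟩, _⟩ => ⟨hEG, hFE⟩⟩
    _ = ∑ F ∈ G.powerset, if F = G then w F else 0 := sum_congr rfl fun F hF => by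
        rw [← sum_mul, sum_Icc_neg_one_pow_card_sub_left (mem_powerset.1 hF), ite_mul, one_mul,
          zero_mul]
    _ = w G := by rw [sum_ite_eq', if_pos (mem_powerset_self G)]

lemma eq_sum_dividend_mul_unanim [Fintype α] (w : Finset α → ℝ) (G : Finset α) :
    w G = ∑ E ∈ (univ : Finset α).powerset, dividend w E * unanim E G := by
  have hfilter : (univ : Finset α).powerset.filter (· ⊆ G) = G.powerset := by ext; simp
  simp only [unanim, mul_ite, mul_one, mul_zero, ← sum_filter, hfilter, sum_powerset_dividend]

end Dividend

section Autonomous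

variable {α : Type*} [DecidableEq α] {A : Finset (Finset α)}

lemma autPartA_subset (A : Finset (Finset α)) (G : Finset α) : autPartA A G ⊆ G :=
  Finset.sup_le fun _ hH => mem_powerset.1 (mem_filter.1 hH).1

lemma autPartA_mem (hempty : ∅ ∈ A) (hA : SupClosed (A : Set (Finset α))) (G : Finset α) :
    autPartA A G ∈ A :=
  hA.finsetSup_mem ⟨∅, by simp [hempty]⟩ fun _ hH => (mem_filter.1 hH).2

lemma subset_autPartA_iff (hempty : ∅ ∈ A) (hA : SupClosed (A : Set (Finset α)))
    {F G : Finset α} : F ⊆ autPartA A G ↔ ∃ H ∈ A, F ⊆ H ∧ H ⊆ G := by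
  refine ⟨fun h => ⟨_, autPartA_mem hempty hA G, h, autPartA_subset A G⟩, ?_⟩
  rintro ⟨H, hHA, hFH, hHG⟩
  exact hFH.trans (le_sup (f := id) (mem_filter.2 ⟨mem_powerset.2 hHG, hHA⟩))

lemma mem_lamSet_iff_minimal {F L : Finset α} :
    L ∈ LamSet A F ↔ Minimal (fun H => H ∈ A ∧ F ⊆ H) L := by
  simp only [LamSet, mem_filter, minimal_iff, and_imp, and_assoc]
  exact and_congr_right' (and_congr_right' ⟨fun h H hHA hFH hHL => (h H hHA hFH hHL).symm,
    fun h H hHA hFH hHL => (h hHA hFH hHL).symm⟩)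

lemma exists_mem_lamSet_subset {F H : Finset α} (hHA : H ∈ A) (hFH : F ⊆ H) :
    ∃ L ∈ LamSet A F, L ⊆ H := by
  obtain ⟨L, hLH, hL⟩ := exists_minimal_le_of_wellFoundedLT (fun H => H ∈ A ∧ F ⊆ H) H ⟨hHA, hFH⟩
  exact ⟨L, mem_lamSet_iff_minimal.2 hL, hLH⟩

lemma subset_autPartA_iff_exists_lamSet (hempty : ∅ ∈ A) (hA : SupClosed (A : Set (Finset α)))
    {F G : Finset α} : F ⊆ autPartA A G ↔ ∃ L ∈ LamSet A F, L ⊆ G := by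
  rw [subset_autPartA_iff hempty hA]
  constructor
  · rintro ⟨H, hHA, hFH, hHG⟩
    obtain ⟨L, hL, hLH⟩ := exists_mem_lamSet_subset hHA hFH
    exact ⟨L, hL, hLH.trans hHG⟩
  · rintro ⟨L, hL, hLG⟩
    exact ⟨L, (mem_lamSet_iff_minimal.1 hL).1.1, (mem_lamSet_iff_minimal.1 hL).1.2, hLG⟩

lemma LamStar.mem (hA : SupClosed (A : Set (Finset α))) {F E : Finset α} (h : LamStar A F E) :
    E ∈ A := by
  obtain ⟨T, hT, hne, rfl⟩ := h
  exact hA.finsetSup_mem hne fun L hL => (mem_lamSet_iff_minimal.1 (hT hL)).1.1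

end Autonomous

section Restriction

variable {α : Type*} [DecidableEq α] {A : Finset (Finset α)}

lemma prod_unanim (T : Finset (Finset α)) (G : Finset α) :
    ∏ L ∈ T, unanim L G = unanim (T.sup id) G := by
  simp only [unanim, prod_boole, Finset.sup_le_iff, id]

lemma unanim_autPartA_eq_sum (hempty : ∅ ∈ A) (hA : SupClosed (A : Set (Finset α)))
    (F G : Finset α) :
    unanim F (autPartA A G)
      = ∑ T ∈ (LamSet A F).powerset with T.Nonempty, -(-1 : ℝ) ^ #T * unanim (T.sup id) G := by
  have hprod : unanim F (autPartA A G) = 1 - ∏ L ∈ LamSet A F, (1 - unanim L G) := by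
    simp only [unanim, subset_autPartA_iff_exists_lamSet hempty hA]
    split_ifs with h
    · obtain ⟨L, hL, hLG⟩ := h
      rw [prod_eq_zero hL (by simp [hLG]), sub_zero]
    · push Not at h
      rw [prod_eq_one fun L hL => by simp [h L hL], sub_self]
  have hempty_term : (LamSet A F).powerset.filter (¬ ·.Nonempty) = {∅} := by
    ext T
    simp only [mem_filter, mem_powerset, not_nonempty_iff_eq_empty, mem_singleton]
    exact and_iff_right_of_imp fun h => h ▸ empty_subset _
  rw [hprod, prod_sub (fun _ => 1) (fun L => unanim L G),
    ← sum_filter_add_sum_filter_not _ Finset.Nonempty, hempty_term]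
  have hunanim_empty : unanim ∅ G = 1 := if_pos (empty_subset G)
  simp only [prod_const_one, mul_one, prod_unanim, sum_singleton, card_empty, pow_zero,
    sup_empty, bot_eq_empty, hunanim_empty, neg_mul, sum_neg_distrib]
  ring

lemma dividend_unanim_autPartA_eq_zero (hempty : ∅ ∈ A) (hA : SupClosed (A : Set (Finset α)))
    {F E : Finset α} (h : ¬ LamStar A F E) :
    dividend (fun G => unanim F (autPartA A G)) E = 0 := by
  rw [funext (unanim_autPartA_eq_sum hempty hA F), dividend_sum_mul]
  refine sum_eq_zero fun T hT => ?_
  rw [dividend_unanim, if_neg, mul_zero]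
  rintro rfl
  obtain ⟨hTF, hne⟩ := mem_filter.1 hT
  exact h ⟨T, mem_powerset.1 hTF, hne, rfl⟩

lemma dividend_comp_autPartA [Fintype α] (A : Finset (Finset α)) (v : Finset α → ℝ)
    (E : Finset α) :
    dividend (fun G => v (autPartA A G)) E
      = ∑ F ∈ (univ : Finset α).powerset,
          dividend v F * dividend (fun G => unanim F (autPartA A G)) E := by
  simp only [eq_sum_dividend_mul_unanim v (autPartA A _), dividend_sum_mul]

end Restriction

theorem stmt18_general {α : Type*} [Fintype α] [DecidableEq α]
    (A : Finset (Finset α)) (hempty : ∅ ∈ A)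
    (hunion : ∀ E ∈ A, ∀ F ∈ A, E ∪ F ∈ A)
    (v : Finset α → ℝ) :
    ∀ G : Finset α,
      v (autPartA A G)
        = ∑ E ∈ A,
            (∑ F ∈ (univ : Finset α).powerset,
              if LamStar A F E then
                dividend (fun G' => unanim F (autPartA A G')) E * dividend v F
              else 0)
            * unanim E G := by
  intro G
  have hA : SupClosed (A : Set (Finset α)) := hunion
  have hdividend : ∀ E, dividend (fun G' => v (autPartA A G')) E
      = ∑ F ∈ (univ : Finset α).powerset,
          if LamStar A F E then
            dividend (fun G' => unanim F (autPartA A G')) E * dividend v F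
          else 0 := fun E => by
    rw [dividend_comp_autPartA]
    refine sum_congr rfl fun F _ => ?_
    split_ifs with h
    · exact mul_comm _ _
    · rw [dividend_unanim_autPartA_eq_zero hempty hA h, mul_zero]
  refine (eq_sum_dividend_mul_unanim (fun G' => v (autPartA A G')) G).trans ?_
  rw [← sum_subset (s₁ := A) fun E _ => mem_powerset.2 (subset_univ E)]
  · simp only [hdividend]
  · intro E _ hE
    rw [hdividend, sum_eq_zero fun F _ => if_neg fun h => hE (h.mem hA), zero_mul]

theorem stmt18 {α : Type*} [Fintype α] [DecidableEq α]
    (A : Finset (Finset α)) (hempty : ∅ ∈ A) (huniv : univ ∈ A)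
    (hunion : ∀ E ∈ A, ∀ F ∈ A, E ∪ F ∈ A)
    (v : Finset α → ℝ) (hv0 : v ∅ = 0) :
    ∀ G : Finset α,
      v (autPartA A G)
        = ∑ E ∈ A,
            (∑ F ∈ (univ : Finset α).powerset,
              if LamStar A F E then
                dividend (fun G' => unanim F (autPartA A G')) E * dividend v F
              else 0)
            * unanim E G :=
  stmt18_general A hempty hunion v
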